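/- In the MAX-3-SAT shopping instance, from any purchase plan with total discount k' one can construct a truth assignment satisfying at least k' − 2n clauses of φ. -/

import Mathlib

/-!
A literal shop reaches its threshold 3 only if it receives both occurrences of its literal and
the book of its variable, so at most one literal of each variable is saturated. Let `τ` make
false the literal whose shop receives the variable's book; then every saturated literal is false.
A clause shop that earns its discount although its clause is unsatisfied bought an occurrence of
a false, unsaturated literal, and each literal has only two occurrences. Hence the clause shops
of unsatisfied clauses earn at most twice the number of unsaturated false literals, the literal
shops earn twice the number of saturated ones, and together this is at most `2n`.
-/

open Finset

namespace ShoppingReduction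

variable {ι κ V : Type*}

abbrev Book (ι κ V : Type*) := (ι × κ) ⊕ V

abbrev Shop (ι V : Type*) := ι ⊕ (V × Bool)

structure IsPurchasePlan (clauses : ι → κ → V × Bool) (g : Book ι κ V → Shop ι V) : Prop where
  clause_book : ∀ i j, g (.inl (i, j)) = .inl i ∨ g (.inl (i, j)) = .inr (clauses i j)
  var_book : ∀ v, ∃ b, g (.inr v) = .inr (v, b)

section Assignment

variable [DecidableEq ι] [DecidableEq V]

def planAssignment (g : Book ι κ V → Shop ι V) (v : V) : Bool :=
  decide (g (.inr v) = .inr (v, false))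

theorem planAssignment_ne {g : Book ι κ V → Shop ι V} {ℓ : V × Bool}
    (h : g (.inr ℓ.1) = .inr ℓ) : planAssignment g ℓ.1 ≠ ℓ.2 := by
  obtain ⟨v, b⟩ := ℓ
  cases b <;> simp_all [planAssignment]

end Assignment

variable [Fintype ι] [Fintype κ]

def satisfiedClauses (clauses : ι → κ → V × Bool) (τ : V → Bool) : Finset ι :=
  univ.filter fun i => ∃ j, τ (clauses i j).1 = (clauses i j).2

variable [DecidableEq V]

def occurrences (clauses : ι → κ → V × Bool) (ℓ : V × Bool) : Finset (ι × κ) :=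
  univ.filter fun p => clauses p.1 p.2 = ℓ

theorem card_filter_clauses_mem_le {clauses : ι → κ → V × Bool} {k : ℕ}
    (hocc : ∀ ℓ, #(occurrences clauses ℓ) ≤ k) (L : Finset (V × Bool)) :
    #(univ.filter fun p : ι × κ => clauses p.1 p.2 ∈ L) ≤ k * #L := by
  classical
  have : (univ.filter fun p : ι × κ => clauses p.1 p.2 ∈ L) = L.biUnion (occurrences clauses) := by
    ext p; simp [occurrences]
  rw [this, mul_comm]
  exact card_biUnion_le_card_mul _ _ _ fun ℓ _ => hocc ℓ

variable [Fintype V]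

def falseLiterals (τ : V → Bool) : Finset (V × Bool) :=
  univ.image fun v => (v, !τ v)

theorem mem_falseLiterals {τ : V → Bool} {ℓ : V × Bool} :
    ℓ ∈ falseLiterals τ ↔ τ ℓ.1 ≠ ℓ.2 := by
  obtain ⟨v, b⟩ := ℓ
  cases b <;> cases h : τ v <;> simp [falseLiterals, h]

theorem card_falseLiterals (τ : V → Bool) : #(falseLiterals τ) = Fintype.card V :=
  card_image_of_injective _ fun _ _ h => congrArg Prod.fst h

variable [DecidableEq ι]

def basket (g : Book ι κ V → Shop ι V) (s : Shop ι V) : Finset (Book ι κ V) :=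
  univ.filter fun b => g b = s

@[simp]
theorem mem_basket {g : Book ι κ V → Shop ι V} {s : Shop ι V} {b : Book ι κ V} :
    b ∈ basket g s ↔ g b = s := by
  simp [basket]

def discount (g : Book ι κ V → Shop ι V) : ℕ :=
  ∑ s ∈ univ.filter (fun s => Sum.elim (fun _ => 1) (fun _ => 3) s ≤ #(basket g s)),
    Sum.elim (fun _ => 1) (fun _ => 2) s

def reachedClauses (g : Book ι κ V → Shop ι V) : Finset ι :=
  univ.filter fun i => 1 ≤ #(basket g (.inl i))

def saturatedLiterals (g : Book ι κ V → Shop ι V) : Finset (V × Bool) :=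
  univ.filter fun ℓ => 3 ≤ #(basket g (.inr ℓ))

theorem discount_eq (g : Book ι κ V → Shop ι V) :
    discount g = #(reachedClauses g) + 2 * #(saturatedLiterals g) := by
  rw [discount, sum_filter, Fintype.sum_sum_type, reachedClauses, saturatedLiterals,
    card_filter, card_filter, mul_sum]
  simp only [Sum.elim_inl, Sum.elim_inr, mul_ite, mul_one, mul_zero]
  rfl

section Plan

variable {clauses : ι → κ → V × Bool} {g : Book ι κ V → Shop ι V}

theorem basket_inr_subset (hg : IsPurchasePlan clauses g) (ℓ : V × Bool) :
    basket g (.inr ℓ) ⊆ (occurrences clauses ℓ).disjSum {ℓ.1} := by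
  intro b hb
  rw [mem_basket] at hb
  rcases b with p | v
  · rcases hg.clause_book p.1 p.2 with h | h <;> rw [h] at hb
    · exact absurd hb Sum.inl_ne_inr
    · simpa [occurrences] using Sum.inr.inj hb
  · obtain ⟨b, h⟩ := hg.var_book v
    rw [h, Sum.inr.injEq] at hb
    simp [← hb]

theorem basket_inr_eq_of_mem_saturatedLiterals (hg : IsPurchasePlan clauses g)
    {ℓ : V × Bool} (hocc : #(occurrences clauses ℓ) ≤ 2) (hℓ : ℓ ∈ saturatedLiterals g) :
    basket g (.inr ℓ) = (occurrences clauses ℓ).disjSum {ℓ.1} := by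
  refine eq_of_subset_of_card_le (basket_inr_subset hg ℓ) ?_
  rw [card_disjSum, card_singleton]
  simp only [saturatedLiterals, mem_filter, mem_univ, true_and] at hℓ
  omega

theorem saturatedLiterals_subset_falseLiterals (hg : IsPurchasePlan clauses g)
    (hocc : ∀ ℓ, #(occurrences clauses ℓ) ≤ 2) :
    saturatedLiterals g ⊆ falseLiterals (planAssignment g) := by
  intro ℓ hℓ
  have hv : Sum.inr ℓ.1 ∈ basket g (.inr ℓ) := by
    rw [basket_inr_eq_of_mem_saturatedLiterals hg (hocc ℓ) hℓ]
    simp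
  exact mem_falseLiterals.2 (planAssignment_ne (mem_basket.1 hv))

theorem exists_clause_book_of_mem_reachedClauses (hg : IsPurchasePlan clauses g) {i : ι}
    (hi : i ∈ reachedClauses g) : ∃ j, g (.inl (i, j)) = .inl i := by
  simp only [reachedClauses, mem_filter, mem_univ, true_and, Nat.one_le_iff_ne_zero,
    card_ne_zero] at hi
  obtain ⟨b, hb⟩ := hi
  rw [mem_basket] at hb
  rcases b with ⟨i', j⟩ | v
  · rcases hg.clause_book i' j with h | h <;> rw [h] at hb
    · obtain rfl := Sum.inl.inj hb
      exact ⟨j, h⟩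
    · exact absurd hb Sum.inr_ne_inl
  · obtain ⟨b, h⟩ := hg.var_book v
    rw [h] at hb
    exact absurd hb Sum.inr_ne_inl

theorem reachedClauses_subset (hg : IsPurchasePlan clauses g)
    (hocc : ∀ ℓ, #(occurrences clauses ℓ) ≤ 2) :
    reachedClauses g ⊆ satisfiedClauses clauses (planAssignment g) ∪
      (univ.filter fun p : ι × κ => clauses p.1 p.2 ∈
        falseLiterals (planAssignment g) \ saturatedLiterals g).image Prod.fst := by
  intro i hi
  obtain ⟨j, hj⟩ := exists_clause_book_of_mem_reachedClauses hg hi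
  by_cases hsat : i ∈ satisfiedClauses clauses (planAssignment g)
  · exact mem_union_left _ hsat
  refine mem_union_right _ (mem_image.2 ⟨(i, j), ?_, rfl⟩)
  simp only [mem_filter, mem_univ, true_and, mem_sdiff, mem_falseLiterals]
  refine ⟨fun h => hsat ?_, fun hℓ => ?_⟩
  · simp only [satisfiedClauses, mem_filter, mem_univ, true_and]
    exact ⟨j, h⟩
  · have hb : Sum.inl (i, j) ∈ basket g (.inr (clauses i j)) := by
      rw [basket_inr_eq_of_mem_saturatedLiterals hg (hocc _) hℓ]
      simp [occurrences]
    rw [mem_basket, hj] at hb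
    exact Sum.inl_ne_inr hb

theorem discount_le (hg : IsPurchasePlan clauses g) (hocc : ∀ ℓ, #(occurrences clauses ℓ) ≤ 2) :
    discount g ≤ 2 * Fintype.card V + #(satisfiedClauses clauses (planAssignment g)) := by
  set τ := planAssignment g
  set S := saturatedLiterals g
  have hS : S ⊆ falseLiterals τ := saturatedLiterals_subset_falseLiterals hg hocc
  calc discount g = #(reachedClauses g) + 2 * #S := discount_eq g
    _ ≤ #(satisfiedClauses clauses τ) + 2 * #(falseLiterals τ \ S) + 2 * #S := by
      gcongr
      refine (card_le_card (reachedClauses_subset hg hocc)).trans ((card_union_le _ _).trans ?_)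
      gcongr
      exact card_image_le.trans (card_filter_clauses_mem_le hocc _)
    _ = 2 * Fintype.card V + #(satisfiedClauses clauses τ) := by
      rw [add_assoc, ← mul_add, card_sdiff_add_card_eq_card hS, card_falseLiterals, add_comm]

end Plan

end ShoppingReduction

/-- MAX-3-SAT reduction, soundness direction: from any purchase plan of total
discount `k'` one can construct a truth assignment satisfying at least
`k' - 2n` clauses (stated as `k' ≤ 2n + #satisfied clauses`). -/
theorem stmt_13 {n m : ℕ} (clauses : Fin m → Fin 3 → Fin n × Bool)
    (hlit : ∀ (v : Fin n) (sgn : Bool),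
      (Finset.univ.filter (fun p : Fin m × Fin 3 => clauses p.1 p.2 = (v, sgn))).card = 2) :
    let Book := (Fin m × Fin 3) ⊕ Fin n
    let Shop := Fin m ⊕ (Fin n × Bool)
    let sells : Shop → Book → Prop := fun s b =>
      match s, b with
      | .inl i, .inl (i', _) => i' = i
      | .inl _, .inr _ => False
      | .inr (v, sgn), .inl (i, j) => clauses i j = (v, sgn)
      | .inr (v, _), .inr v' => v' = v
    let dshop : Shop → ℕ := Sum.elim (fun _ => 1) (fun _ => 2)
    let tshop : Shop → ℕ := Sum.elim (fun _ => 1) (fun _ => 3)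
    ∀ g : Book → Shop, (∀ b, sells (g b) b) →
      ∃ τ : Fin n → Bool,
        ∑ s ∈ Finset.univ.filter
            (fun s : Shop =>
              tshop s ≤ (Finset.univ.filter (fun b : Book => g b = s)).card),
          dshop s
          ≤ 2 * n + (Finset.univ.filter
              (fun i : Fin m => ∃ j : Fin 3, τ (clauses i j).1 = (clauses i j).2)).card := by
  intro Book Shop sells dshop tshop g hg
  have hplan : ShoppingReduction.IsPurchasePlan clauses g := by
    constructor
    · intro i j
      have h := hg (.inl (i, j))
      rcases hgij : g (.inl (i, j)) with i' | ℓ <;> rw [hgij] at h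
      · exact .inl (congrArg Sum.inl h.symm)
      · exact .inr (congrArg Sum.inr h.symm)
    · intro v
      have h := hg (.inr v)
      rcases hgv : g (.inr v) with i | ⟨v', b⟩ <;> rw [hgv] at h
      · exact h.elim
      · exact ⟨b, by rw [h]⟩
  have h := ShoppingReduction.discount_le hplan fun ℓ => (hlit ℓ.1 ℓ.2).le
  rw [Fintype.card_fin] at h
  refine ⟨ShoppingReduction.planAssignment g, h.trans_eq ?_⟩
  -- the statement decides `∃ j : Fin 3` by `Nat.decidableExistsFin`, not by the generic instance
  unfold ShoppingReduction.satisfiedClauses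
  congr!
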